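/- Let ε > 0 be real and let E be a finite multiset of nonnegative integers with sum S and sum of squares Q. Suppose a reversed move is played: choose α positive elements e₁,…,e_α of E, subtract 1 from each, and insert z = ⌈α/(1+ε)⌉ as a new element, producing E'. Then the sum of squares Q' of E' satisfies Q' - Q ≥ -2S + (1-ε)²α² (assuming 0 < ε < 1). -/

import Mathlib

/-- Effect of a reversed move on the sum of squares of a multiset of
nonnegative integers. -/
theorem stmt_4 (ε : ℝ) (hε : 0 < ε) (hε1 : ε < 1)
    (E F : Multiset ℕ) (hF : F ≤ E) (hpos : ∀ x ∈ F, 0 < x)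
    (α : ℕ) (hα : α = Multiset.card F)
    (z : ℕ) (hz : (z : ℤ) = ⌈(α : ℝ) / (1 + ε)⌉)
    (E' : Multiset ℕ) (hE' : E' = (E - F) + F.map (fun x => x - 1) + {z}) :
    ((E'.map (fun x => (x : ℝ) ^ 2)).sum) - ((E.map (fun x => (x : ℝ) ^ 2)).sum) ≥
      -2 * ((E.map (fun x => (x : ℝ))).sum) + (1 - ε) ^ 2 * (α : ℝ) ^ 2 := by
  have key : ∀ (s : Multiset ℕ) (f : ℝ → ℝ),
      (Multiset.map f (do let a ← s; pure ((a : ℝ)) : Multiset ℝ)).sum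
        = (s.map (fun x : ℕ => f (x : ℝ))).sum := by
    intro s f
    simp [Bind.bind, Pure.pure, Multiset.pure_def, Multiset.bind_def,
      Multiset.bind_singleton, Multiset.map_map, Function.comp]
  rw [show ((E'.map (fun x => (x : ℝ) ^ 2)).sum) = ((E' : Multiset ℕ).map (fun x : ℕ => ((x : ℝ)) ^ 2)).sum from key E' (fun x => x ^ 2),
      show ((E.map (fun x => (x : ℝ) ^ 2)).sum) = (E.map (fun x : ℕ => ((x : ℝ)) ^ 2)).sum from key E (fun x => x ^ 2),
      show ((E.map (fun x => (x : ℝ))).sum) = (E.map (fun x : ℕ => ((x : ℝ)))).sum from key E (fun x => x)]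
  have hEF : (E - F) + F = E := tsub_add_cancel_of_le hF
  set G := E - F with hG
  set A := (G.map (fun x : ℕ => (x : ℝ) ^ 2)).sum with hA
  set B := (F.map (fun x : ℕ => (x : ℝ) ^ 2)).sum with hB
  set T := (F.map (fun x : ℕ => (x : ℝ))).sum with hT
  have hQ : (E.map (fun x : ℕ => (x : ℝ) ^ 2)).sum = A + B := by
    rw [← hEF, Multiset.map_add, Multiset.sum_add]
  have hS : (E.map (fun x : ℕ => (x : ℝ))).sum = (G.map (fun x : ℕ => (x : ℝ))).sum + T := by
    rw [← hEF, Multiset.map_add, Multiset.sum_add]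
  have hmap : (F.map (fun x => x - 1)).map (fun x : ℕ => (x : ℝ) ^ 2)
      = F.map (fun x : ℕ => (x : ℝ) ^ 2 - 2 * (x : ℝ) + 1) := by
    rw [Multiset.map_map]
    refine Multiset.map_congr rfl (fun x hx => ?_)
    have h1 : 1 ≤ x := hpos x hx
    simp only [Function.comp]
    push_cast [Nat.cast_sub h1]
    ring
  have hsum : (F.map (fun x : ℕ => (x : ℝ) ^ 2 - 2 * (x : ℝ) + 1)).sum = B - 2 * T + α := by
    rw [show (fun x : ℕ => (x : ℝ) ^ 2 - 2 * (x : ℝ) + 1)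
        = (fun x : ℕ => ((x : ℝ) ^ 2 - 2 * (x : ℝ)) + 1) from rfl]
    rw [Multiset.sum_map_add, Multiset.sum_map_sub, Multiset.sum_map_mul_left]
    simp [hα, hB, hT]
  have hQ' : (E'.map (fun x : ℕ => (x : ℝ) ^ 2)).sum = A + (B - 2 * T + α) + (z : ℝ) ^ 2 := by
    rw [hE', Multiset.map_add, Multiset.map_add, Multiset.sum_add, Multiset.sum_add,
      hmap, hsum]
    simp [hA]
  have hGnn : 0 ≤ (G.map (fun x : ℕ => (x : ℝ))).sum :=
    Multiset.sum_nonneg (by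
      intro y hy
      obtain ⟨x, _, rfl⟩ := Multiset.mem_map.mp hy
      positivity)
  have hzge : (α : ℝ) / (1 + ε) ≤ (z : ℝ) := by
    have h := Int.le_ceil ((α : ℝ) / (1 + ε))
    rw [← hz] at h
    exact_mod_cast h
  have h1ε : 0 < 1 + ε := by linarith
  have hαnn : (0 : ℝ) ≤ α := Nat.cast_nonneg α
  have hzsq : (1 - ε) ^ 2 * (α : ℝ) ^ 2 ≤ (z : ℝ) ^ 2 := by
    have h2 : (1 - ε) * α ≤ (α : ℝ) / (1 + ε) := by
      rw [div_eq_mul_inv, ← sub_nonneg]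
      have : (α : ℝ) * (1 + ε)⁻¹ - (1 - ε) * α = α * ε ^ 2 * (1 + ε)⁻¹ := by
        field_simp; ring
      rw [this]; positivity
    have h3 : (0 : ℝ) ≤ (1 - ε) * α := by nlinarith
    nlinarith [hzge, h2]
  rw [hQ, hQ', hS]
  nlinarith [hzsq, hGnn, hαnn]
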